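/- arXiv:2410.18059 — 3 statements merged into one kernel-verified Lean document; each statement's English description precedes it below -/
import Mathlib

section
/- For every X ∈ G_β and every 1 ≤ i ≤ N one has 0 ≤ Q_X(i) ≤ 1, and for all X, Y ∈ G_β and every 1 ≤ i ≤ N one has |Q_X(i) − Q_Y(i)| ≤ max(N³/β², N/β)·‖X − Y‖₁. -/
/-- `m_X = ∑_{k=1}^N X(k)`. -/
noncomputable def mS (N : ℕ) (X : ℕ → ℝ) : ℝ := ∑ k ∈ Finset.Icc 1 N, X k

/-- `M_X = ∑_{k=1}^N k·X(k)`. -/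
noncomputable def MS (N : ℕ) (X : ℕ → ℝ) : ℝ := ∑ k ∈ Finset.Icc 1 N, (k : ℝ) * X k

/-- `Q_X(i) = (1/M_X)·∑_{k=i}^N k·X(k)`. -/
noncomputable def QS (N : ℕ) (X : ℕ → ℝ) (i : ℕ) : ℝ :=
  (∑ k ∈ Finset.Icc i N, (k : ℝ) * X k) / MS N X

/-- The 1-norm `‖X − Y‖₁ = ∑_{k=0}^N |X(k) − Y(k)|`. -/
noncomputable def norm1 (N : ℕ) (X Y : ℕ → ℝ) : ℝ :=
  ∑ k ∈ Finset.range (N + 1), |X k - Y k|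

/-- Membership in the cube `[0,1]^{N+1}`. -/
def cube (N : ℕ) (X : ℕ → ℝ) : Prop := ∀ k ≤ N, 0 ≤ X k ∧ X k ≤ 1

/-- `G_β = {X ∈ [0,1]^{N+1} : m_X ≥ β}`. -/
def Gset (N : ℕ) (β : ℝ) (X : ℕ → ℝ) : Prop := cube N X ∧ β ≤ mS N X

/-!
Writing `A` for the tail sum `∑_{k ≥ i} k X(k)` and `C` for the head sum `∑_{k < i} k X(k)`,
one has `Q_X(i) = A / (A + C)` with `A, C ≥ 0` and `A + C = M_X ≥ m_X ≥ β`. The difference of two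
such quotients is `(A_X (C_Y - C_X) + C_X (A_X - A_Y)) / (M_X M_Y)`, whose numerator is at most
`M_X (|A_X - A_Y| + |C_X - C_Y|) ≤ M_X · N ‖X - Y‖₁`; hence `|Q_X(i) - Q_Y(i)| ≤ (N / β) ‖X - Y‖₁`.
-/

open Finset

lemma abs_div_add_sub_div_add_le {a c b d : ℝ} (ha : 0 ≤ a) (hc : 0 ≤ c)
    (hac : 0 < a + c) (hbd : 0 < b + d) :
    |a / (a + c) - b / (b + d)| ≤ (|a - b| + |c - d|) / (b + d) := by
  have hnum : |a * (b + d) - (a + c) * b| ≤ (a + c) * (|a - b| + |c - d|) :=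
    calc |a * (b + d) - (a + c) * b| = |a * (d - c) + c * (a - b)| := by congr 1; ring
      _ ≤ a * |d - c| + c * |a - b| := by
        refine (abs_add_le _ _).trans_eq ?_
        rw [abs_mul, abs_mul, abs_of_nonneg ha, abs_of_nonneg hc]
      _ ≤ (a + c) * (|a - b| + |c - d|) := by
        rw [abs_sub_comm d c]
        nlinarith [abs_nonneg (a - b), abs_nonneg (c - d)]
  rw [div_sub_div _ _ hac.ne' hbd.ne', abs_div, abs_of_pos (mul_pos hac hbd),
    div_le_div_iff₀ (mul_pos hac hbd) hbd]
  linarith [mul_le_mul_of_nonneg_right hnum hbd.le]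

lemma sum_Icc_one_eq_sum_Icc_add_sum_Ico {M : Type*} [AddCommMonoid M] (f : ℕ → M) {i N : ℕ}
    (hi : 1 ≤ i) (hiN : i ≤ N + 1) :
    ∑ k ∈ Icc 1 N, f k = ∑ k ∈ Icc i N, f k + ∑ k ∈ Ico 1 i, f k := by
  rw [← Ico_add_one_right_eq_Icc, ← Ico_add_one_right_eq_Icc,
    ← sum_Ico_consecutive _ hi hiN, add_comm]

section WeightedSum

variable (X Y : ℕ → ℝ) (s : Finset ℕ)

noncomputable def weightedSum : ℝ := ∑ k ∈ s, (k : ℝ) * X k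

variable {X Y s}

lemma weightedSum_nonneg (hX : ∀ k ∈ s, 0 ≤ X k) : 0 ≤ weightedSum X s :=
  sum_nonneg fun k hk => mul_nonneg k.cast_nonneg (hX k hk)

lemma abs_weightedSum_sub_le {N : ℕ} (hs : ∀ k ∈ s, k ≤ N) :
    |weightedSum X s - weightedSum Y s| ≤ N * ∑ k ∈ s, |X k - Y k| := by
  rw [weightedSum, weightedSum, ← sum_sub_distrib, mul_sum]
  refine (abs_sum_le_sum_abs _ _).trans (sum_le_sum fun k hk => ?_)
  rw [← mul_sub, abs_mul, Nat.abs_cast]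
  exact mul_le_mul_of_nonneg_right (by exact_mod_cast hs k hk) (abs_nonneg _)

end WeightedSum

section Cube

variable {N i : ℕ} {β : ℝ} {X Y : ℕ → ℝ}

lemma weightedSum_nonneg_of_cube {s : Finset ℕ} (hX : cube N X) (hs : ∀ k ∈ s, k ≤ N) :
    0 ≤ weightedSum X s :=
  weightedSum_nonneg fun k hk => (hX k (hs k hk)).1

lemma MS_eq_weightedSum_add (X : ℕ → ℝ) (hi : 1 ≤ i) (hiN : i ≤ N + 1) :
    MS N X = weightedSum X (Icc i N) + weightedSum X (Ico 1 i) :=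
  sum_Icc_one_eq_sum_Icc_add_sum_Ico _ hi hiN

lemma mS_le_MS (hX : cube N X) : mS N X ≤ MS N X := by
  refine sum_le_sum fun k hk => ?_
  rw [mem_Icc] at hk
  exact le_mul_of_one_le_left (hX k hk.2).1 (by exact_mod_cast hk.1)

lemma QS_nonneg (hX : cube N X) : 0 ≤ QS N X i :=
  div_nonneg (weightedSum_nonneg_of_cube hX fun _ hk => (mem_Icc.mp hk).2)
    (weightedSum_nonneg_of_cube hX fun _ hk => (mem_Icc.mp hk).2)

lemma QS_le_one (hX : cube N X) (hi : 1 ≤ i) : QS N X i ≤ 1 :=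
  div_le_one_of_le₀
    (sum_le_sum_of_subset_of_nonneg (Icc_subset_Icc_left hi) fun k hk _ =>
      mul_nonneg k.cast_nonneg (hX k (mem_Icc.mp hk).2).1)
    (weightedSum_nonneg_of_cube hX fun _ hk => (mem_Icc.mp hk).2)

lemma norm1_nonneg (N : ℕ) (X Y : ℕ → ℝ) : 0 ≤ norm1 N X Y :=
  sum_nonneg fun _ _ => abs_nonneg _

lemma sum_Icc_one_abs_sub_le_norm1 (N : ℕ) (X Y : ℕ → ℝ) :
    ∑ k ∈ Icc 1 N, |X k - Y k| ≤ norm1 N X Y :=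
  sum_le_sum_of_subset_of_nonneg (fun k hk => by simp only [mem_Icc, mem_range] at hk ⊢; omega)
    fun _ _ _ => abs_nonneg _

lemma abs_QS_sub_QS_le (hβ : 0 < β) (hX : Gset N β X) (hY : Gset N β Y) (hi : 1 ≤ i)
    (hiN : i ≤ N + 1) : |QS N X i - QS N Y i| ≤ N / β * norm1 N X Y := by
  have htail : ∀ k ∈ Icc i N, k ≤ N := fun k hk => (mem_Icc.mp hk).2
  have hhead : ∀ k ∈ Ico 1 i, k ≤ N := fun k hk => by have := (mem_Ico.mp hk).2; omega
  have hβX : β ≤ MS N X := hX.2.trans (mS_le_MS hX.1)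
  have hβY : β ≤ MS N Y := hY.2.trans (mS_le_MS hY.1)
  calc |QS N X i - QS N Y i|
      ≤ (|weightedSum X (Icc i N) - weightedSum Y (Icc i N)|
          + |weightedSum X (Ico 1 i) - weightedSum Y (Ico 1 i)|) / MS N Y := by
        rw [MS_eq_weightedSum_add _ hi hiN] at hβX hβY ⊢
        rw [QS, QS, MS_eq_weightedSum_add _ hi hiN, MS_eq_weightedSum_add _ hi hiN]
        exact abs_div_add_sub_div_add_le (weightedSum_nonneg_of_cube hX.1 htail)
          (weightedSum_nonneg_of_cube hX.1 hhead) (hβ.trans_le hβX) (hβ.trans_le hβY)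
    _ ≤ N * (∑ k ∈ Icc 1 N, |X k - Y k|) / MS N Y := by
        rw [sum_Icc_one_eq_sum_Icc_add_sum_Ico _ hi hiN, mul_add]
        exact div_le_div_of_nonneg_right
          (add_le_add (abs_weightedSum_sub_le htail) (abs_weightedSum_sub_le hhead))
          (hβ.trans_le hβY).le
    _ ≤ N * norm1 N X Y / β := by
        gcongr
        · exact mul_nonneg N.cast_nonneg (norm1_nonneg N X Y)
        · exact sum_Icc_one_abs_sub_le_norm1 N X Y
    _ = N / β * norm1 N X Y := (div_mul_eq_mul_div _ _ _).symm

end Cube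

theorem QS_bounds_and_lipschitz_general (N : ℕ) (β : ℝ) (hβ0 : 0 < β) :
    (∀ X : ℕ → ℝ, Gset N β X → ∀ i : ℕ, 1 ≤ i → i ≤ N →
      0 ≤ QS N X i ∧ QS N X i ≤ 1) ∧
    (∀ X Y : ℕ → ℝ, Gset N β X → Gset N β Y → ∀ i : ℕ, 1 ≤ i → i ≤ N →
      |QS N X i - QS N Y i| ≤ max ((N : ℝ) ^ 3 / β ^ 2) ((N : ℝ) / β) * norm1 N X Y) :=
  ⟨fun _ hX _ hi _ => ⟨QS_nonneg hX.1, QS_le_one hX.1 hi⟩,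
    fun X Y hX hY _ hi hiN => (abs_QS_sub_QS_le hβ0 hX hY hi (by omega)).trans
      (mul_le_mul_of_nonneg_right (le_max_right _ _) (norm1_nonneg N X Y))⟩

/-- For every `X ∈ G_β` and `1 ≤ i ≤ N`, `0 ≤ Q_X(i) ≤ 1`; and for all `X, Y ∈ G_β`
and `1 ≤ i ≤ N`, `|Q_X(i) − Q_Y(i)| ≤ max(N³/β², N/β)·‖X − Y‖₁`. -/
theorem QS_bounds_and_lipschitz (N : ℕ) (hN : 1 ≤ N) (β : ℝ) (hβ0 : 0 < β) (hβ1 : β < 1) :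
    (∀ X : ℕ → ℝ, Gset N β X → ∀ i : ℕ, 1 ≤ i → i ≤ N →
      0 ≤ QS N X i ∧ QS N X i ≤ 1) ∧
    (∀ X Y : ℕ → ℝ, Gset N β X → Gset N β Y → ∀ i : ℕ, 1 ≤ i → i ≤ N →
      |QS N X i - QS N Y i| ≤ max ((N : ℝ) ^ 3 / β ^ 2) ((N : ℝ) / β) * norm1 N X Y) :=
  QS_bounds_and_lipschitz_general N β hβ0
end

section
/- For each i with 1 ≤ i ≤ N there exists a constant K > 0 such that for all X, Y ∈ G_β one has |F_i(X) − F_i(Y)| ≤ K·‖X − Y‖₁; that is, every component of the UNI-MIN limiting vector field is Lipschitz continuous on G_β. -/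
/-- The `i`-th component (`1 ≤ i ≤ N`) of the limiting vector field of the UNI-MIN
matching algorithm:
`F_i(X) = −X(i)/m_X − ((M_X − m_X)/m_X)·((i·X(i) − (i+1)·X(i+1))/M_X)
          − ∑_{k=1}^N (X(k)/m_X)·(Q_X(i)^k − Q_X(i+1)^k)
          − ((i·X(i) − (i+1)·X(i+1))/M_X)·∑_{l=1}^N (l−1)·∑_{k=1}^N (X(k)/m_X)·(Q_X(l)^k − Q_X(l+1)^k)`. -/
noncomputable def Fi (N : ℕ) (i : ℕ) (X : ℕ → ℝ) : ℝ :=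
  -(X i / mS N X)
    - ((MS N X - mS N X) / mS N X) *
        (((i : ℝ) * X i - ((i : ℝ) + 1) * X (i + 1)) / MS N X)
    - ∑ k ∈ Finset.Icc 1 N, (X k / mS N X) * (QS N X i ^ k - QS N X (i + 1) ^ k)
    - (((i : ℝ) * X i - ((i : ℝ) + 1) * X (i + 1)) / MS N X) *
        ∑ l ∈ Finset.Icc 1 N, ((l : ℝ) - 1) *
          ∑ k ∈ Finset.Icc 1 N, (X k / mS N X) * (QS N X l ^ k - QS N X (l + 1) ^ k)

namespace FiAux

/-- Extension of a finite vector to `ℕ → ℝ` by zero. -/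
noncomputable def ext (N : ℕ) (x : Fin (N + 1) → ℝ) : ℕ → ℝ :=
  fun k => if h : k < N + 1 then x ⟨k, h⟩ else 0

lemma ext_contDiff (N k : ℕ) : ContDiff ℝ 1 (fun x : Fin (N + 1) → ℝ => ext N x k) := by
  unfold ext
  by_cases h : k < N + 1
  · simp only [dif_pos h]
    exact (ContinuousLinearMap.proj (R := ℝ) (φ := fun _ : Fin (N + 1) => ℝ)
      (⟨k, h⟩ : Fin (N + 1))).contDiff
  · simp only [dif_neg h]; exact contDiff_const

lemma mS_contDiff (N : ℕ) :
    ContDiff ℝ 1 (fun x : Fin (N + 1) → ℝ => mS N (ext N x)) := by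
  unfold mS; exact ContDiff.sum fun k _ => ext_contDiff N k

lemma MS_contDiff (N : ℕ) :
    ContDiff ℝ 1 (fun x : Fin (N + 1) → ℝ => MS N (ext N x)) := by
  unfold MS; exact ContDiff.sum fun k _ => contDiff_const.mul (ext_contDiff N k)

/-- The open set where both `m` and `M` are larger than `β/2`. -/
def U (N : ℕ) (β : ℝ) : Set (Fin (N + 1) → ℝ) :=
  {x | β / 2 < mS N (ext N x)} ∩ {x | β / 2 < MS N (ext N x)}

lemma U_open (N : ℕ) (β : ℝ) : IsOpen (U N β) :=
  (isOpen_lt continuous_const (mS_contDiff N).continuous).inter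
    (isOpen_lt continuous_const (MS_contDiff N).continuous)

lemma Fi_contDiffOn (N i : ℕ) (β : ℝ) (hβ : 0 < β) :
    ContDiffOn ℝ 1 (fun x => Fi N i (ext N x)) (U N β) := by
  have hm := (mS_contDiff N).contDiffOn (s := U N β)
  have hM := (MS_contDiff N).contDiffOn (s := U N β)
  have hmne : ∀ x ∈ U N β, mS N (ext N x) ≠ 0 := fun x hx =>
    ne_of_gt (lt_trans (by positivity) hx.1)
  have hMne : ∀ x ∈ U N β, MS N (ext N x) ≠ 0 := fun x hx =>
    ne_of_gt (lt_trans (by positivity) hx.2)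
  have hg : ∀ k, ContDiffOn ℝ 1 (fun x => ext N x k) (U N β) := fun k =>
    (ext_contDiff N k).contDiffOn
  have hq : ∀ j, ContDiffOn ℝ 1 (fun x => QS N (ext N x) j) (U N β) := by
    intro j; unfold QS
    exact (ContDiff.sum fun k _ => contDiff_const.mul (ext_contDiff N k)).contDiffOn.div hM hMne
  unfold Fi
  refine ContDiffOn.sub (ContDiffOn.sub (ContDiffOn.sub ?_ ?_) ?_) ?_
  · exact ((hg i).div hm hmne).neg
  · exact ((hM.sub hm).div hm hmne).mul
      (((contDiffOn_const.mul (hg i)).sub (contDiffOn_const.mul (hg (i + 1)))).div hM hMne)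
  · exact ContDiffOn.sum fun k _ =>
      ((hg k).div hm hmne).mul (((hq i).pow k).sub ((hq (i + 1)).pow k))
  · exact (((contDiffOn_const.mul (hg i)).sub (contDiffOn_const.mul (hg (i + 1)))).div hM hMne).mul
      (ContDiffOn.sum fun l _ => contDiffOn_const.mul (ContDiffOn.sum fun k _ =>
        ((hg k).div hm hmne).mul (((hq l).pow k).sub ((hq (l + 1)).pow k))))

lemma Fi_congr (N i : ℕ) (X Y : ℕ → ℝ) (hi : i ≤ N) (h : ∀ k ≤ N + 1, X k = Y k) :
    Fi N i X = Fi N i Y := by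
  have hIcc : ∀ {a : ℕ} {k : ℕ}, k ∈ Finset.Icc a N → k ≤ N + 1 := fun hk =>
    (Finset.mem_Icc.mp hk).2.trans (Nat.le_succ N)
  have hm : mS N X = mS N Y := Finset.sum_congr rfl fun k hk => h k (hIcc hk)
  have hM : MS N X = MS N Y := Finset.sum_congr rfl fun k hk => by rw [h k (hIcc hk)]
  have hQ : ∀ j, QS N X j = QS N Y j := by
    intro j; unfold QS
    rw [hM]
    congr 1
    exact Finset.sum_congr rfl fun k hk => by rw [h k (hIcc hk)]
  have hXi : X i = Y i := h i (hi.trans (Nat.le_succ N))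
  have hXi1 : X (i + 1) = Y (i + 1) := h (i + 1) (by omega)
  have hsum : ∀ a b : ℕ,
      (∑ k ∈ Finset.Icc 1 N, (X k / mS N Y) * (QS N Y a ^ k - QS N Y b ^ k)) =
      ∑ k ∈ Finset.Icc 1 N, (Y k / mS N Y) * (QS N Y a ^ k - QS N Y b ^ k) := fun a b =>
    Finset.sum_congr rfl fun k hk => by rw [h k (hIcc hk)]
  simp only [Fi, hm, hM, hQ, hXi, hXi1, hsum]

end FiAux

/-- For each `1 ≤ i ≤ N` there exists `K > 0` such that for all `X, Y ∈ G_β`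
(with the convention `X(N+1) = 0`), `|F_i(X) − F_i(Y)| ≤ K·‖X − Y‖₁`: every
component of the UNI-MIN limiting vector field is Lipschitz continuous on `G_β`. -/
theorem Fi_lipschitz (N : ℕ) (hN : 1 ≤ N) (β : ℝ) (hβ0 : 0 < β) (hβ1 : β < 1)
    (i : ℕ) (hi1 : 1 ≤ i) (hiN : i ≤ N) :
    ∃ K : ℝ, 0 < K ∧ ∀ X Y : ℕ → ℝ, Gset N β X → Gset N β Y →
      X (N + 1) = 0 → Y (N + 1) = 0 →
      |Fi N i X - Fi N i Y| ≤ K * norm1 N X Y := by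
  classical
  open FiAux in
  set f : (Fin (N + 1) → ℝ) → ℝ := fun x => Fi N i (ext N x) with hf
  -- the compact convex set S
  set S : Set (Fin (N + 1) → ℝ) :=
    (Set.univ.pi fun _ => Set.Icc (0 : ℝ) 1) ∩ {x | β ≤ mS N (ext N x)} with hS
  have hmlin : IsLinearMap ℝ (fun x : Fin (N + 1) → ℝ => mS N (ext N x)) := by
    constructor
    · intro x y
      unfold mS
      rw [← Finset.sum_add_distrib]
      refine Finset.sum_congr rfl fun k _ => ?_
      unfold FiAux.ext
      split <;> simp
    · intro c x
      unfold mS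
      rw [smul_eq_mul, Finset.mul_sum]
      refine Finset.sum_congr rfl fun k _ => ?_
      unfold FiAux.ext
      split <;> simp
  have hSconv : Convex ℝ S :=
    (convex_pi fun _ _ => convex_Icc 0 1).inter (convex_halfSpace_ge hmlin β)
  have hScomp : IsCompact S :=
    (isCompact_univ_pi fun _ => isCompact_Icc).inter_right
      (isClosed_le continuous_const (mS_contDiff N).continuous)
  have hSU : S ⊆ U N β := by
    rintro x ⟨hx1, hx2⟩
    have hxnn : ∀ k ∈ Finset.Icc 1 N, (0 : ℝ) ≤ ext N x k := by
      intro k hk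
      unfold FiAux.ext
      split
      · exact (hx1 _ (Set.mem_univ _)).1
      · exact le_refl 0
    have hmM : mS N (ext N x) ≤ MS N (ext N x) := by
      refine Finset.sum_le_sum fun k hk => ?_
      have hk1 : (1 : ℝ) ≤ (k : ℝ) := by
        have := (Finset.mem_Icc.mp hk).1; exact_mod_cast this
      exact le_mul_of_one_le_left (hxnn k hk) hk1
    have hx2' : β ≤ mS N (ext N x) := hx2
    constructor
    · exact lt_of_lt_of_le (half_lt_self hβ0) hx2'
    · exact lt_of_lt_of_le (half_lt_self hβ0) (le_trans hx2' hmM)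
  -- differentiability & derivative bound
  have hCD : ContDiffOn ℝ 1 f (U N β) := Fi_contDiffOn N i β hβ0
  have hdiff : ∀ x ∈ S, DifferentiableAt ℝ f x := fun x hx =>
    (hCD.differentiableOn one_ne_zero).differentiableAt ((U_open N β).mem_nhds (hSU hx))
  have hderc : ContinuousOn (fderiv ℝ f) (U N β) :=
    hCD.continuousOn_fderiv_of_isOpen (U_open N β) le_rfl
  obtain ⟨C, hC⟩ := hScomp.exists_bound_of_continuousOn (hderc.mono hSU)
  refine ⟨max C 1, lt_max_of_lt_right one_pos, ?_⟩
  intro X Y hX hY hX0 hY0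
  -- restrictions
  set rX : Fin (N + 1) → ℝ := fun j => X j with hrX
  set rY : Fin (N + 1) → ℝ := fun j => Y j with hrY
  have hextX : ∀ k ≤ N + 1, ext N rX k = X k := by
    intro k hk
    unfold FiAux.ext
    split
    · rfl
    · rw [show k = N + 1 by omega, hX0]
  have hextY : ∀ k ≤ N + 1, ext N rY k = Y k := by
    intro k hk
    unfold FiAux.ext
    split
    · rfl
    · rw [show k = N + 1 by omega, hY0]
  have hfX : f rX = Fi N i X := Fi_congr N i _ _ hiN hextX
  have hfY : f rY = Fi N i Y := Fi_congr N i _ _ hiN hextY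
  have hmX : mS N (ext N rX) = mS N X :=
    Finset.sum_congr rfl fun k hk =>
      hextX k ((Finset.mem_Icc.mp hk).2.trans (Nat.le_succ N))
  have hmY : mS N (ext N rY) = mS N Y :=
    Finset.sum_congr rfl fun k hk =>
      hextY k ((Finset.mem_Icc.mp hk).2.trans (Nat.le_succ N))
  have hXS : rX ∈ S := by
    refine ⟨fun j _ => hX.1 j (Nat.lt_succ_iff.mp j.isLt), ?_⟩
    show β ≤ mS N (ext N rX)
    rw [hmX]; exact hX.2
  have hYS : rY ∈ S := by
    refine ⟨fun j _ => hY.1 j (Nat.lt_succ_iff.mp j.isLt), ?_⟩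
    show β ≤ mS N (ext N rY)
    rw [hmY]; exact hY.2
  have hbound : ∀ x ∈ S, ‖fderiv ℝ f x‖ ≤ max C 1 := fun x hx =>
    (hC x hx).trans (le_max_left _ _)
  have key : ‖f rX - f rY‖ ≤ max C 1 * ‖rX - rY‖ :=
    Convex.norm_image_sub_le_of_norm_fderiv_le hdiff hbound hSconv hYS hXS
  have hnn : 0 ≤ norm1 N X Y := Finset.sum_nonneg fun k _ => abs_nonneg _
  have hnorm : ‖rX - rY‖ ≤ norm1 N X Y := by
    refine (pi_norm_le_iff_of_nonneg hnn).mpr fun j => ?_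
    have : ‖(rX - rY) j‖ = |X (j : ℕ) - Y (j : ℕ)| := by
      simp [hrX, hrY, Real.norm_eq_abs]
    rw [this]
    exact Finset.single_le_sum (f := fun k => |X k - Y k|)
      (fun k _ => abs_nonneg _) (Finset.mem_range.mpr j.isLt)
  calc |Fi N i X - Fi N i Y| = ‖f rX - f rY‖ := by rw [hfX, hfY, Real.norm_eq_abs]
    _ ≤ max C 1 * ‖rX - rY‖ := key
    _ ≤ max C 1 * norm1 N X Y := by
        exact mul_le_mul_of_nonneg_left hnorm (le_trans zero_le_one (le_max_right C 1))
end

section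
/- Let ρ > 0 and let v : ℝ → ℝ be differentiable at t with v(t) > 0 and v′(t) = −(1 + 1/(1 − e^{−ρ·v(t)})). For j ≥ 1 set x_j(s) = v(s)·(ρ·v(s))^j·e^{−ρ·v(s)}/j!. Then for every integer j ≥ 1 the function s ↦ x_j(s) is differentiable at t with derivative x_j′(t) = −[ x_j(t)/( v(t)·(1 − e^{−ρ·v(t)}) ) + j·x_j(t)/(ρ·v(t)²) + ( (j·x_j(t) − (j+1)·x_{j+1}(t))/(ρ·v(t)²) )·( ρ·v(t)/(1 − e^{−ρ·v(t)}) − 1 + ρ·v(t) ) ]. -/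
/-- The weighted-Poisson family `x_j(s) = v(s)·(ρ·v(s))^j·e^{−ρ·v(s)}/j!`. -/
noncomputable def weightedPoissonAt (ρ : ℝ) (v : ℝ → ℝ) (j : ℕ) (s : ℝ) : ℝ :=
  v s * (ρ * v s) ^ j * Real.exp (-(ρ * v s)) / (Nat.factorial j : ℝ)

/-- Let `ρ > 0` and `v : ℝ → ℝ` be differentiable at `t` with `v(t) > 0` and
`v′(t) = −(1 + 1/(1 − e^{−ρ·v(t)}))`. For `j ≥ 1` set
`x_j(s) = v(s)·(ρ·v(s))^j·e^{−ρ·v(s)}/j!`. Then for every `j ≥ 1`, `s ↦ x_j(s)` is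
differentiable at `t` with derivative
`x_j′(t) = −[ x_j(t)/(v(t)·(1 − e^{−ρ·v(t)})) + j·x_j(t)/(ρ·v(t)²)
  + ((j·x_j(t) − (j+1)·x_{j+1}(t))/(ρ·v(t)²))·(ρ·v(t)/(1 − e^{−ρ·v(t)}) − 1 + ρ·v(t)) ]`. -/
theorem weightedPoisson_solves_greedy_ode (ρ : ℝ) (hρ : 0 < ρ) (v : ℝ → ℝ) (t : ℝ)
    (hvt : 0 < v t)
    (hv' : HasDerivAt v (-(1 + 1 / (1 - Real.exp (-(ρ * v t))))) t)
    (j : ℕ) (hj : 1 ≤ j) :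
    HasDerivAt (fun s => weightedPoissonAt ρ v j s)
      (-(weightedPoissonAt ρ v j t / (v t * (1 - Real.exp (-(ρ * v t))))
        + (j : ℝ) * weightedPoissonAt ρ v j t / (ρ * (v t) ^ 2)
        + (((j : ℝ) * weightedPoissonAt ρ v j t
              - ((j : ℝ) + 1) * weightedPoissonAt ρ v (j + 1) t) / (ρ * (v t) ^ 2))
            * (ρ * v t / (1 - Real.exp (-(ρ * v t))) - 1 + ρ * v t))) t := by
  obtain ⟨k, rfl⟩ : ∃ k, j = k + 1 := ⟨j - 1, (Nat.succ_pred_eq_of_pos hj).symm⟩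
  set V := v t with hV
  set E := Real.exp (-(ρ * V)) with hE
  set w : ℝ := -(1 + 1 / (1 - E)) with hw
  have hVne : V ≠ 0 := ne_of_gt hvt
  have hρne : ρ ≠ 0 := ne_of_gt hρ
  have hE1 : E < 1 := Real.exp_lt_one_iff.mpr (by nlinarith)
  have hDne : (1 - E) ≠ 0 := by linarith
  -- derivative of inner pieces
  have hρv : HasDerivAt (fun s => ρ * v s) (ρ * w) t := hv'.const_mul ρ
  have hpow : HasDerivAt (fun s => (ρ * v s) ^ (k + 1))
      ((k + 1 : ℕ) * (ρ * v t) ^ k * (ρ * w)) t := by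
    simpa using hρv.fun_pow (k + 1)
  have hexp : HasDerivAt (fun s => Real.exp (-(ρ * v s))) (Real.exp (-(ρ * v t)) * -(ρ * w)) t := by
    exact (hρv.neg.exp)
  have hmain : HasDerivAt (fun s => v s * (ρ * v s) ^ (k + 1) * Real.exp (-(ρ * v s))
        / (Nat.factorial (k + 1) : ℝ))
      (((w * (ρ * v t) ^ (k + 1) + v t * ((k + 1 : ℕ) * (ρ * v t) ^ k * (ρ * w)))
          * Real.exp (-(ρ * v t))
        + v t * (ρ * v t) ^ (k + 1) * (Real.exp (-(ρ * v t)) * -(ρ * w)))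
        / (Nat.factorial (k + 1) : ℝ)) t :=
    ((hv'.mul hpow).mul hexp).div_const _
  have heq : (((w * (ρ * v t) ^ (k + 1) + v t * ((k + 1 : ℕ) * (ρ * v t) ^ k * (ρ * w)))
          * Real.exp (-(ρ * v t))
        + v t * (ρ * v t) ^ (k + 1) * (Real.exp (-(ρ * v t)) * -(ρ * w)))
        / (Nat.factorial (k + 1) : ℝ))
      = (-(weightedPoissonAt ρ v (k + 1) t / (v t * (1 - Real.exp (-(ρ * v t))))
        + ((k + 1 : ℕ) : ℝ) * weightedPoissonAt ρ v (k + 1) t / (ρ * (v t) ^ 2)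
        + ((((k + 1 : ℕ) : ℝ) * weightedPoissonAt ρ v (k + 1) t
              - (((k + 1 : ℕ) : ℝ) + 1) * weightedPoissonAt ρ v (k + 1 + 1) t)
              / (ρ * (v t) ^ 2))
            * (ρ * v t / (1 - Real.exp (-(ρ * v t))) - 1 + ρ * v t))) := by
    have hfac : ((Nat.factorial (k + 1) : ℝ)) ≠ 0 := by positivity
    have hfac2 : ((Nat.factorial (k + 2) : ℝ)) ≠ 0 := by positivity
    have hfs : (Nat.factorial (k + 2) : ℝ) = (k + 2 : ℝ) * (Nat.factorial (k + 1) : ℝ) := by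
      rw [Nat.factorial_succ]; push_cast; ring
    simp only [weightedPoissonAt, ← hV, ← hE, hw]
    rw [hfs]
    field_simp
    push_cast
    ring
  rw [show (fun s => weightedPoissonAt ρ v (k + 1) s) = fun s =>
      v s * (ρ * v s) ^ (k + 1) * Real.exp (-(ρ * v s)) / (Nat.factorial (k + 1) : ℝ) from rfl,
    ← heq]
  exact hmain
end
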